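/- arXiv:2412.05793 — 2 statements merged into one kernel-verified Lean document; each statement's English description precedes it below -/
import Mathlib

section
/- Interpolation step with weak Lorentz norm: let Ω be a measure space, 3/2 < r < ∞, and choose 3/2 < r₁ < r < r₂ < ∞ with 2/r = 1/r₁ + 1/r₂. Then for measurable functions θ and v on Ω, ∫ |θ| |v|² ≤ C ‖θ‖_{L^{r,∞}} ‖v‖_{L^{2r₁/(r₁−1)}} ‖v‖_{L^{2r₂/(r₂−1)}}, with C depending only on r, r₁, r₂. -/
/-!
By the layer-cake formula, `∫ |θ| v² = ∫₀^∞ ∫_{|θ| > t} v² dt`. For `s > 1`, Hölder's inequality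
and the weak-type bound `μ{|θ| > t}^{1/r} ≤ ‖θ‖_{L^{r,∞}} / t` give
`∫_{|θ| > t} v² ≤ ‖v‖²_{2s/(s-1)} (‖θ‖_{L^{r,∞}} / t)^{r/s}`.
Use `s = r₂` for small `t` (the exponent `r/r₂ < 1` is integrable at `0`) and `s = r₁` for large `t`
(the exponent `r/r₁ > 1` is integrable at `∞`). As `r/r₁ + r/r₂ = 2`, splitting at the level where
the two bounds agree gives the constant `2 / (r/r₁ - 1)` times the geometric mean of the two bounds,
which is `‖θ‖_{L^{r,∞}} ‖v‖_{2r₁/(r₁-1)} ‖v‖_{2r₂/(r₂-1)}`.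
-/

open MeasureTheory ENNReal
open scoped NNReal

/-- The Lorentz quasinorm `‖f‖_{L^{p,q}}`; in particular `lorentzNorm μ r ⊤ f` is the
weak-`L^r` norm `sup_{t>0} t μ{|f|>t}^{1/r}`. -/
noncomputable def lorentzNorm {α : Type*} [MeasurableSpace α] (μ : Measure α)
    (p : ℝ) (q : ℝ≥0∞) (f : α → ℝ) : ℝ≥0∞ :=
  if q = ⊤ then ⨆ t : ℝ, ⨆ _ : 0 < t, ENNReal.ofReal t * (μ {x | t < |f x|}) ^ (1 / p)
  else (∫⁻ t in Set.Ioi (0 : ℝ),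
      ENNReal.ofReal p * (ENNReal.ofReal t) ^ (q.toReal - 1) *
        (μ {x | t < |f x|}) ^ (q.toReal / p)) ^ (1 / q.toReal)

section Measure

variable {α : Type*} [MeasurableSpace α] {μ : Measure α}

theorem measure_rpow_le_lorentzNorm_top_div (p : ℝ) (f : α → ℝ) {t : ℝ} (ht : 0 < t) :
    μ {x | t < |f x|} ^ (1 / p) ≤ lorentzNorm μ p ⊤ f / ENNReal.ofReal t := by
  rw [ENNReal.le_div_iff_mul_le (.inl (ENNReal.ofReal_pos.2 ht).ne') (.inl ofReal_ne_top),
    mul_comm, lorentzNorm, if_pos rfl]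
  exact le_iSup₂ (f := fun t (_ : 0 < t) => ENNReal.ofReal t * μ {x | t < |f x|} ^ (1 / p)) t ht

theorem lintegral_ofReal_abs_mul_eq_lintegral_Ioi {θ : α → ℝ} {g : α → ℝ≥0∞}
    (hθ : Measurable θ) (hg : Measurable g) :
    ∫⁻ x, ENNReal.ofReal |θ x| * g x ∂μ =
      ∫⁻ t in Set.Ioi (0 : ℝ), ∫⁻ x in {x | t < |θ x|}, g x ∂μ := by
  calc ∫⁻ x, ENNReal.ofReal |θ x| * g x ∂μ
      = ∫⁻ x, ENNReal.ofReal |θ x| ∂μ.withDensity g := by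
        rw [lintegral_withDensity_eq_lintegral_mul _ hg hθ.abs.ennreal_ofReal]
        simp only [Pi.mul_apply, mul_comm]
    _ = ∫⁻ t in Set.Ioi (0 : ℝ), μ.withDensity g {x | t < |θ x|} :=
        lintegral_eq_lintegral_meas_lt _ (.of_forall fun x => abs_nonneg _) hθ.abs.aemeasurable
    _ = ∫⁻ t in Set.Ioi (0 : ℝ), ∫⁻ x in {x | t < |θ x|}, g x ∂μ := by
        simp only [withDensity_apply _ (measurableSet_lt measurable_const hθ.abs)]

theorem setLIntegral_sq_le_eLpNorm_sq_mul_measure_rpow {v : α → ℝ}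
    (hv : AEStronglyMeasurable v μ) {s : ℝ} (hs : 1 < s) (A : Set α) :
    ∫⁻ x in A, ENNReal.ofReal (v x ^ 2) ∂μ ≤
      eLpNorm v (ENNReal.ofReal (2 * s / (s - 1))) μ ^ 2 * μ A ^ (1 / s) := by
  have hs1 : 0 < s - 1 := by linarith
  have hq : (2 : ℝ≥0∞) ≤ ENNReal.ofReal (2 * s / (s - 1)) := by
    rw [← ENNReal.ofReal_ofNat 2]
    refine ENNReal.ofReal_le_ofReal ?_
    rw [le_div_iff₀ hs1]
    linarith
  have hL2 : ∫⁻ x in A, ENNReal.ofReal (v x ^ 2) ∂μ = eLpNorm v 2 (μ.restrict A) ^ 2 := by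
    have hpow := eLpNorm_nnreal_pow_eq_lintegral (f := v) (μ := μ.restrict A) (p := 2) two_ne_zero
    simp only [NNReal.coe_ofNat, ENNReal.coe_ofNat, rpow_ofNat] at hpow
    rw [hpow]
    refine lintegral_congr fun x => ?_
    rw [Real.enorm_eq_ofReal_abs, ← ENNReal.ofReal_pow (abs_nonneg _), sq_abs]
  have hexp : 1 / (2 : ℝ≥0∞).toReal - 1 / (ENNReal.ofReal (2 * s / (s - 1))).toReal
      = 1 / s / 2 := by
    rw [ENNReal.toReal_ofReal (by positivity), ENNReal.toReal_ofNat]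
    field_simp
    ring
  have hHolder := eLpNorm_le_eLpNorm_mul_rpow_measure_univ hq (hv.restrict (s := A))
  rw [hexp, Measure.restrict_apply_univ] at hHolder
  calc ∫⁻ x in A, ENNReal.ofReal (v x ^ 2) ∂μ
      ≤ (eLpNorm v (ENNReal.ofReal (2 * s / (s - 1))) μ * μ A ^ (1 / s / 2)) ^ 2 := by
        rw [hL2]
        gcongr
        exact hHolder.trans (mul_le_mul_left (eLpNorm_mono_measure _ Measure.restrict_le_self) _)
    _ = eLpNorm v (ENNReal.ofReal (2 * s / (s - 1))) μ ^ 2 * μ A ^ (1 / s) := by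
        rw [mul_pow, ← ENNReal.rpow_natCast, ← ENNReal.rpow_natCast (μ A ^ _), ← ENNReal.rpow_mul]
        norm_num

theorem setLIntegral_sq_le_eLpNorm_sq_mul_lorentzNorm_top_div_rpow {θ v : α → ℝ}
    (hv : AEStronglyMeasurable v μ) {r s : ℝ} (hr : 0 < r) (hs : 1 < s) {t : ℝ} (ht : 0 < t) :
    ∫⁻ x in {x | t < |θ x|}, ENNReal.ofReal (v x ^ 2) ∂μ ≤
      eLpNorm v (ENNReal.ofReal (2 * s / (s - 1))) μ ^ 2 *
        (lorentzNorm μ r ⊤ θ / ENNReal.ofReal t) ^ (r / s) := by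
  refine (setLIntegral_sq_le_eLpNorm_sq_mul_measure_rpow hv hs _).trans (mul_le_mul_right ?_ _)
  calc μ {x | t < |θ x|} ^ (1 / s) = (μ {x | t < |θ x|} ^ (1 / r)) ^ (r / s) := by
        rw [← ENNReal.rpow_mul]
        congr 1
        field_simp
    _ ≤ (lorentzNorm μ r ⊤ θ / ENNReal.ofReal t) ^ (r / s) :=
        ENNReal.rpow_le_rpow (measure_rpow_le_lorentzNorm_top_div r θ ht)
          (div_pos hr (by linarith)).le

end Measure

theorem lintegral_Ioc_ofReal_rpow_neg {c : ℝ} (hc : c < 1) {T : ℝ} (hT : 0 ≤ T) :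
    ∫⁻ t in Set.Ioc 0 T, ENNReal.ofReal (t ^ (-c)) = ENNReal.ofReal (T ^ (1 - c) / (1 - c)) := by
  have hint : IntegrableOn (fun t : ℝ => t ^ (-c)) (Set.Ioc 0 T) :=
    (intervalIntegrable_iff_integrableOn_Ioc_of_le hT).1
      (intervalIntegral.intervalIntegrable_rpow' (by linarith))
  rw [← ofReal_integral_eq_lintegral_ofReal hint
    ((ae_restrict_iff' measurableSet_Ioc).2 (.of_forall fun t ht => Real.rpow_nonneg ht.1.le _)),
    ← intervalIntegral.integral_of_le hT, integral_rpow (.inl (by linarith)),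
    Real.zero_rpow (by linarith), sub_zero, neg_add_eq_sub]

theorem lintegral_Ioi_ofReal_rpow_neg {c : ℝ} (hc : 1 < c) {T : ℝ} (hT : 0 < T) :
    ∫⁻ t in Set.Ioi T, ENNReal.ofReal (t ^ (-c)) = ENNReal.ofReal (T ^ (1 - c) / (c - 1)) := by
  rw [← ofReal_integral_eq_lintegral_ofReal (integrableOn_Ioi_rpow_of_lt (by linarith) hT)
    ((ae_restrict_iff' measurableSet_Ioi).2
      (.of_forall fun t ht => Real.rpow_nonneg (hT.trans ht).le _)),
    integral_Ioi_rpow_of_lt (by linarith) hT, neg_add_eq_sub, ← neg_sub c 1, div_neg, ← neg_div]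
  ring_nf

theorem lintegral_Ioi_le_of_le_ofReal_rpow_neg {f : ℝ → ℝ≥0∞} {a w n₁ n₂ : ℝ}
    (ha₁ : 1 < a) (ha₂ : a < 2) (hw : 0 < w) (hn₁ : 0 < n₁) (hn₂ : 0 < n₂)
    (hf₁ : ∀ t > 0, f t ≤ ENNReal.ofReal (n₁ ^ 2 * w ^ a) * ENNReal.ofReal (t ^ (-a)))
    (hf₂ : ∀ t > 0, f t ≤
      ENNReal.ofReal (n₂ ^ 2 * w ^ (2 - a)) * ENNReal.ofReal (t ^ (-(2 - a)))) :
    ∫⁻ t in Set.Ioi 0, f t ≤ ENNReal.ofReal (2 / (a - 1) * w * n₁ * n₂) := by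
  -- the two bounds on `f` cross at `T`: `n₂ ^ 2 * (w / T) ^ (2 - a) = n₁ ^ 2 * (w / T) ^ a`
  set T := w * (n₁ / n₂) ^ (1 / (a - 1))
  have hT : 0 < T := by positivity
  have hTpow : T ^ (a - 1) = w ^ (a - 1) * (n₁ / n₂) := by
    rw [Real.mul_rpow hw.le (by positivity), ← Real.rpow_mul (by positivity),
      one_div_mul_cancel (by linarith), Real.rpow_one]
  have hbalance : n₂ ^ 2 * w ^ (2 - a) * (T ^ (1 - (2 - a)) / (1 - (2 - a))) +
      n₁ ^ 2 * w ^ a * (T ^ (1 - a) / (a - 1)) = 2 / (a - 1) * w * n₁ * n₂ := by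
    have hwa : w ^ a = w * w ^ (a - 1) := by
      rw [← Real.rpow_one_add' hw.le (by linarith)]; ring_nf
    have hw2a : w ^ (2 - a) * w ^ (a - 1) = w := by
      rw [← Real.rpow_add hw]; norm_num
    rw [show 1 - (2 - a) = a - 1 by ring, show 1 - a = -(a - 1) by ring, Real.rpow_neg hT.le,
      hTpow, hwa]
    have hwa_pos : 0 < w ^ (a - 1) := by positivity
    field_simp
    rw [hw2a]
    ring
  calc ∫⁻ t in Set.Ioi 0, f t
      = (∫⁻ t in Set.Ioc 0 T, f t) + ∫⁻ t in Set.Ioi T, f t := by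
        rw [← Set.Ioc_union_Ioi_eq_Ioi hT.le,
          lintegral_union measurableSet_Ioi (Set.Ioc_disjoint_Ioi le_rfl)]
    _ ≤ (∫⁻ t in Set.Ioc 0 T,
          ENNReal.ofReal (n₂ ^ 2 * w ^ (2 - a)) * ENNReal.ofReal (t ^ (-(2 - a)))) +
        ∫⁻ t in Set.Ioi T, ENNReal.ofReal (n₁ ^ 2 * w ^ a) * ENNReal.ofReal (t ^ (-a)) :=
        add_le_add (setLIntegral_mono' measurableSet_Ioc fun t ht => hf₂ t ht.1)
          (setLIntegral_mono' measurableSet_Ioi fun t ht => hf₁ t (hT.trans ht))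
    _ = ENNReal.ofReal (2 / (a - 1) * w * n₁ * n₂) := by
        rw [lintegral_const_mul' _ _ ofReal_ne_top, lintegral_const_mul' _ _ ofReal_ne_top,
          lintegral_Ioc_ofReal_rpow_neg (by linarith) hT.le, lintegral_Ioi_ofReal_rpow_neg ha₁ hT,
          ← ENNReal.ofReal_mul (by positivity), ← ENNReal.ofReal_mul (by positivity),
          ← ENNReal.ofReal_add
            (mul_nonneg (by positivity) (div_nonneg (by positivity) (by linarith)))
            (mul_nonneg (by positivity) (div_nonneg (by positivity) (by linarith))), hbalance]

theorem lintegral_Ioi_le_of_le_div_rpow {f : ℝ → ℝ≥0∞} {a : ℝ} (ha₁ : 1 < a) (ha₂ : a < 2)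
    {W N₁ N₂ : ℝ≥0∞} (hf₁ : ∀ t > 0, f t ≤ N₁ ^ 2 * (W / ENNReal.ofReal t) ^ a)
    (hf₂ : ∀ t > 0, f t ≤ N₂ ^ 2 * (W / ENNReal.ofReal t) ^ (2 - a)) :
    ∫⁻ t in Set.Ioi 0, f t ≤ ENNReal.ofReal (2 / (a - 1)) * W * N₁ * N₂ := by
  have hC : 0 < 2 / (a - 1) := div_pos two_pos (by linarith)
  by_cases hzero : W = 0 ∨ N₁ = 0 ∨ N₂ = 0
  · have hf : Set.EqOn f 0 (Set.Ioi 0) := fun t ht => by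
      rcases hzero with h | h | h
      · simpa [h, ENNReal.zero_rpow_of_pos (by linarith : 0 < a)] using hf₁ t ht
      · simpa [h] using hf₁ t ht
      · simpa [h] using hf₂ t ht
    rw [setLIntegral_congr_fun measurableSet_Ioi hf, Pi.zero_def, lintegral_zero]
    exact zero_le
  by_cases htop : W = ⊤ ∨ N₁ = ⊤ ∨ N₂ = ⊤
  · simp only [not_or] at hzero
    rcases htop with h | h | h <;> simp [h, hzero, hC]
  simp only [not_or] at hzero htop
  have hreal : ∀ X : ℝ≥0∞, X ≠ 0 → X ≠ ⊤ → ∃ x : ℝ, 0 < x ∧ ENNReal.ofReal x = X :=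
    fun X h0 htop => ⟨X.toReal, toReal_pos h0 htop, ofReal_toReal htop⟩
  obtain ⟨w, hw, rfl⟩ := hreal W hzero.1 htop.1
  obtain ⟨n₁, hn₁, rfl⟩ := hreal N₁ hzero.2.1 htop.2.1
  obtain ⟨n₂, hn₂, rfl⟩ := hreal N₂ hzero.2.2 htop.2.2
  have hconv : ∀ n c : ℝ, 0 ≤ n → 0 ≤ c → ∀ t > 0, ENNReal.ofReal n ^ 2 *
      (ENNReal.ofReal w / ENNReal.ofReal t) ^ c =
        ENNReal.ofReal (n ^ 2 * w ^ c) * ENNReal.ofReal (t ^ (-c)) := fun n c hn hc t ht => by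
    rw [← ENNReal.ofReal_div_of_pos ht, ENNReal.ofReal_rpow_of_nonneg (by positivity) hc,
      ← ENNReal.ofReal_pow hn, Real.div_rpow hw.le ht.le, Real.rpow_neg ht.le, div_eq_mul_inv,
      ← ENNReal.ofReal_mul (sq_nonneg n),
      ← ENNReal.ofReal_mul (by positivity : (0 : ℝ) ≤ n ^ 2 * w ^ c), mul_assoc]
  rw [← ENNReal.ofReal_mul hC.le, ← ENNReal.ofReal_mul (mul_pos hC hw).le,
    ← ENNReal.ofReal_mul (mul_pos (mul_pos hC hw) hn₁).le]
  exact lintegral_Ioi_le_of_le_ofReal_rpow_neg ha₁ ha₂ hw hn₁ hn₂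
    (fun t ht => (hf₁ t ht).trans_eq (hconv n₁ a hn₁.le (by linarith) t ht))
    (fun t ht => (hf₂ t ht).trans_eq (hconv n₂ (2 - a) hn₂.le (by linarith) t ht))

/-- Interpolation step with weak Lorentz norm: for `3/2 < r₁ < r < r₂ < ∞` with
`2/r = 1/r₁ + 1/r₂`, one has
`∫ |θ| |v|² ≤ C ‖θ‖_{L^{r,∞}} ‖v‖_{L^{2r₁/(r₁−1)}} ‖v‖_{L^{2r₂/(r₂−1)}}`,
with `C` depending only on `r, r₁, r₂`. -/
theorem weak_lorentz_interpolation_step (r r₁ r₂ : ℝ)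
    (hr₁ : 3 / 2 < r₁) (h₁r : r₁ < r) (hrr₂ : r < r₂)
    (hsum : 2 / r = 1 / r₁ + 1 / r₂) :
    ∃ C : ℝ≥0, 0 < C ∧
      ∀ (α : Type) (_ : MeasurableSpace α) (μ : Measure α) (θ v : α → ℝ),
        Measurable θ → Measurable v →
        (∫⁻ x, ENNReal.ofReal (|θ x| * (v x) ^ 2) ∂μ) ≤
          (C : ℝ≥0∞) * lorentzNorm μ r ⊤ θ *
            eLpNorm v (ENNReal.ofReal (2 * r₁ / (r₁ - 1))) μ *
            eLpNorm v (ENNReal.ofReal (2 * r₂ / (r₂ - 1))) μ := by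
  have hr : 0 < r := by linarith
  have ha₁ : 1 < r / r₁ := (one_lt_div (by linarith)).2 h₁r
  have hr₂ : r / r₂ = 2 - r / r₁ :=
    calc r / r₂ = r * (2 / r - 1 / r₁) := by rw [hsum]; ring
      _ = 2 - r / r₁ := by field_simp
  have ha₂ : r / r₁ < 2 := by
    have : 0 < r / r₂ := div_pos hr (by linarith)
    linarith
  refine ⟨(2 / (r / r₁ - 1)).toNNReal, Real.toNNReal_pos.2 (div_pos two_pos (by linarith)),
    fun α _ μ θ v hθ hv => ?_⟩
  have hofReal_mul : ∀ x, ENNReal.ofReal (|θ x| * v x ^ 2) =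
      ENNReal.ofReal |θ x| * ENNReal.ofReal (v x ^ 2) :=
    fun x => ENNReal.ofReal_mul (abs_nonneg _)
  simp only [hofReal_mul]
  rw [lintegral_ofReal_abs_mul_eq_lintegral_Ioi hθ (hv.pow_const 2).ennreal_ofReal]
  refine lintegral_Ioi_le_of_le_div_rpow ha₁ ha₂ (fun t ht => ?_) (fun t ht => ?_)
  · exact setLIntegral_sq_le_eLpNorm_sq_mul_lorentzNorm_top_div_rpow hv.aestronglyMeasurable
      hr (by linarith) ht
  · rw [← hr₂]
    exact setLIntegral_sq_le_eLpNorm_sq_mul_lorentzNorm_top_div_rpow hv.aestronglyMeasurable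
      hr (by linarith) ht
end

section
/- Weak-Lorentz bound for ρu: let r ∈ (3, ∞), 3 < r₁ < r < r₂ < ∞ with 2/r = 1/r₁ + 1/r₂, and s = 2/(1 − 3/r). Suppose 0 ≤ ρ ≤ M on ℝ³ and ρ ∈ L²(ℝ³) ∩ L^{r₂}(ℝ³). Then for any vector field u, ‖ρu‖²_{L²} ≤ C(M, r) (1 + ‖u‖_{L^{r,∞}}^s)(‖ρ‖²_{L²} + 1), where ‖u‖_{L^{r,∞}} is the weak-L^r norm of u. -/
open MeasureTheory ENNReal
open scoped NNReal

/-!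
Split space along the level set `{‖u‖ > T}`. Off it `‖ρu‖² ≤ T² ρ²`; on it `ρ ≤ M`, and it
remains to bound `∫_{‖u‖>T} ‖u‖²`. Cutting `{‖u‖ > T}` into the dyadic shells
`T 2ᵏ < ‖u‖ ≤ T 2ᵏ⁺¹` gives `∫_{‖u‖>T} ‖u‖² ≤ (8 / T) sup_{t ≥ T} t³ |{‖u‖ > t}|`, and
`t³ |{‖u‖ > t}| ≤ A^r t^(3-r)` with `A = ‖u‖_{L^{r,∞}}`. For `T = max 1 (A^(r/(r-3)))` this
supremum is at most `1`, while `T² ≤ 1 + A^s`; hence `‖ρu‖² ≤ 8 M² + (1 + A^s) ‖ρ‖²`.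
-/

lemma exists_nat_mem_Ioc_two_pow {x : ℝ} (hx : 1 < x) :
    ∃ k : ℕ, x ∈ Set.Ioc (2 ^ k) (2 ^ (k + 1)) := by
  obtain ⟨n, hn⟩ := exists_mem_Ioc_zpow (zero_lt_one.trans hx) one_lt_two
  have hn₀ : 0 ≤ n := by
    by_contra! h
    have : (2 : ℝ) ^ (n + 1) ≤ 1 := zpow_le_one_of_nonpos₀ one_le_two (by omega)
    linarith [hn.2]
  lift n to ℕ using hn₀
  exact ⟨n, by simpa [← zpow_natCast] using hn⟩

lemma ENNReal.add_le_mul_mul_add_one {a b e : ℝ≥0∞} (hb : 1 ≤ b) :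
    a + b * e ≤ (1 + a) * b * (e + 1) :=
  calc a + b * e ≤ (1 + a) * b + (1 + a) * b * e := by
        gcongr
        · exact le_add_self.trans (le_mul_of_one_le_right' hb)
        · exact le_mul_of_one_le_left' le_self_add
    _ = (1 + a) * b * (e + 1) := by ring

lemma ENNReal.rpow_mul_le_one_of_rpow_mul_le {x y m : ℝ≥0∞} {p r : ℝ} (hx₀ : x ≠ 0)
    (hx : x ≠ ⊤) (hyx : y ≤ x) (hpr : p ≤ r) (h : x ^ r * m ≤ y ^ (r - p)) :
    x ^ p * m ≤ 1 := by
  have hsplit : x ^ r = x ^ p * x ^ (r - p) := by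
    rw [← ENNReal.rpow_add _ _ hx₀ hx, add_sub_cancel]
  refine (ENNReal.mul_le_mul_iff_left (c := x ^ (r - p)) (by positivity) (by finiteness)).1 ?_
  calc x ^ p * m * x ^ (r - p) = x ^ r * m := by rw [hsplit]; ring
    _ ≤ y ^ (r - p) := h
    _ ≤ 1 * x ^ (r - p) := by rw [one_mul]; gcongr

section

variable {α E : Type*} [MeasurableSpace α] {μ : Measure α} [NormedAddCommGroup E]

lemma ofReal_rpow_mul_meas_lt_abs_le_lorentzNorm_top (f : α → ℝ) {r t : ℝ} (hr : 0 < r)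
    (ht : 0 < t) :
    ENNReal.ofReal t ^ r * μ {x | t < |f x|} ≤ lorentzNorm μ r ⊤ f ^ r := by
  have h : ENNReal.ofReal t * μ {x | t < |f x|} ^ (1 / r) ≤ lorentzNorm μ r ⊤ f := by
    rw [lorentzNorm, if_pos rfl]
    exact le_iSup₂_of_le t ht le_rfl
  calc ENNReal.ofReal t ^ r * μ {x | t < |f x|}
      = (ENNReal.ofReal t * μ {x | t < |f x|} ^ (1 / r)) ^ r := by
        rw [ENNReal.mul_rpow_of_nonneg _ _ hr.le, ← ENNReal.rpow_mul, one_div_mul_cancel hr.ne',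
          ENNReal.rpow_one]
    _ ≤ lorentzNorm μ r ⊤ f ^ r := ENNReal.rpow_le_rpow h hr.le

lemma sq_eLpNorm_two_eq_lintegral (f : α → E) :
    eLpNorm f 2 μ ^ 2 = ∫⁻ x, ‖f x‖ₑ ^ 2 ∂μ := by
  simpa using eLpNorm_nnreal_pow_eq_lintegral (f := f) (μ := μ) (p := 2) two_ne_zero

lemma setLIntegral_enorm_sq_le_of_meas_lt_le {f : α → E} {T : ℝ} (hT : 0 < T) {C : ℝ≥0∞}
    (hC : ∀ t, T ≤ t → ENNReal.ofReal t ^ 3 * μ {x | t < ‖f x‖} ≤ C) :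
    ∫⁻ x in {x | T < ‖f x‖}, ‖f x‖ₑ ^ 2 ∂μ ≤ ENNReal.ofReal (8 / T) * C := by
  set shell : ℕ → Set α := fun k => {x | T * 2 ^ k < ‖f x‖ ∧ ‖f x‖ ≤ T * 2 ^ (k + 1)}
  have hcover : {x | T < ‖f x‖} ⊆ ⋃ k, shell k := fun x hx => by
    obtain ⟨k, hk⟩ := exists_nat_mem_Ioc_two_pow ((one_lt_div hT).2 hx)
    exact Set.mem_iUnion.2 ⟨k, (lt_div_iff₀' hT).1 hk.1, (div_le_iff₀' hT).1 hk.2⟩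
  have hshell (k : ℕ) : ∫⁻ x in shell k, ‖f x‖ₑ ^ 2 ∂μ ≤
      ENNReal.ofReal (8 / T / 2 / 2 ^ k) * C := by
    have hpow : (T * 2 ^ (k + 1)) ^ 2 = 8 / T / 2 / 2 ^ k * (T * 2 ^ k) ^ 3 := by
      field_simp; ring
    calc ∫⁻ x in shell k, ‖f x‖ₑ ^ 2 ∂μ
        ≤ ∫⁻ _ in shell k, ENNReal.ofReal ((T * 2 ^ (k + 1)) ^ 2) ∂μ :=
          setLIntegral_mono measurable_const fun x hx => by
            rw [← ofReal_norm, ← ENNReal.ofReal_pow (norm_nonneg _)]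
            exact ENNReal.ofReal_le_ofReal (pow_le_pow_left₀ (norm_nonneg _) hx.2 2)
      _ ≤ ENNReal.ofReal (8 / T / 2 / 2 ^ k) *
            (ENNReal.ofReal (T * 2 ^ k) ^ 3 * μ {x | T * 2 ^ k < ‖f x‖}) := by
        rw [setLIntegral_const, hpow, ENNReal.ofReal_mul (by positivity),
          ENNReal.ofReal_pow (by positivity), mul_assoc]
        gcongr
        exact fun x hx => hx.1
      _ ≤ ENNReal.ofReal (8 / T / 2 / 2 ^ k) * C := by
        gcongr
        exact hC _ (le_mul_of_one_le_right hT.le (one_le_pow₀ one_le_two))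
  calc ∫⁻ x in {x | T < ‖f x‖}, ‖f x‖ₑ ^ 2 ∂μ
      ≤ ∑' k, ∫⁻ x in shell k, ‖f x‖ₑ ^ 2 ∂μ :=
        (lintegral_mono_set hcover).trans (lintegral_iUnion_le _ _)
    _ ≤ ∑' k, ENNReal.ofReal (8 / T / 2 / 2 ^ k) * C := ENNReal.tsum_le_tsum hshell
    _ = ENNReal.ofReal (8 / T) * C := by
      rw [ENNReal.tsum_mul_right, ← ENNReal.ofReal_tsum_of_nonneg (fun k => by positivity)
        (summable_geometric_two' _), tsum_geometric_two']

lemma sq_eLpNorm_smul_le {ρ : α → ℝ} {u : α → E} [NormedSpace ℝ E] {M T : ℝ} {S : Set α}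
    (hS : MeasurableSet S) (hρ : ∀ x, ‖ρ x‖ ≤ M) (hu : ∀ x ∉ S, ‖u x‖ ≤ T) :
    eLpNorm (fun x => ρ x • u x) 2 μ ^ 2 ≤
      ENNReal.ofReal M ^ 2 * ∫⁻ x in S, ‖u x‖ₑ ^ 2 ∂μ +
        ENNReal.ofReal T ^ 2 * eLpNorm ρ 2 μ ^ 2 := by
  rw [sq_eLpNorm_two_eq_lintegral, sq_eLpNorm_two_eq_lintegral, ← lintegral_add_compl _ hS]
  gcongr
  · calc ∫⁻ x in S, ‖ρ x • u x‖ₑ ^ 2 ∂μ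
        ≤ ∫⁻ x in S, ENNReal.ofReal M ^ 2 * ‖u x‖ₑ ^ 2 ∂μ :=
          setLIntegral_mono' hS fun x _ => by
            rw [enorm_smul, mul_pow, ← ofReal_norm (ρ x)]
            gcongr
            exact hρ x
      _ = ENNReal.ofReal M ^ 2 * ∫⁻ x in S, ‖u x‖ₑ ^ 2 ∂μ :=
          lintegral_const_mul' _ _ (by finiteness)
  · calc ∫⁻ x in Sᶜ, ‖ρ x • u x‖ₑ ^ 2 ∂μ
        ≤ ∫⁻ x in Sᶜ, ENNReal.ofReal T ^ 2 * ‖ρ x‖ₑ ^ 2 ∂μ :=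
          setLIntegral_mono' hS.compl fun x hx => by
            rw [enorm_smul, mul_pow, mul_comm, ← ofReal_norm (u x)]
            gcongr
            exact hu x hx
      _ = ENNReal.ofReal T ^ 2 * ∫⁻ x in Sᶜ, ‖ρ x‖ₑ ^ 2 ∂μ :=
          lintegral_const_mul' _ _ (by finiteness)
      _ ≤ ENNReal.ofReal T ^ 2 * ∫⁻ x, ‖ρ x‖ₑ ^ 2 ∂μ :=
        mul_le_mul_right (setLIntegral_le_lintegral _ _) _

lemma setLIntegral_enorm_sq_le_of_lorentzNorm_top_le {u : α → E} {r T : ℝ} (hr : 3 ≤ r) (hT : 1 ≤ T)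
    (hA : lorentzNorm μ r ⊤ (fun x => ‖u x‖) ^ r ≤ ENNReal.ofReal T ^ (r - 3)) :
    ∫⁻ x in {x | T < ‖u x‖}, ‖u x‖ₑ ^ 2 ∂μ ≤ 8 := by
  have hT₀ : 0 < T := zero_lt_one.trans_le hT
  calc ∫⁻ x in {x | T < ‖u x‖}, ‖u x‖ₑ ^ 2 ∂μ ≤ ENNReal.ofReal (8 / T) * 1 := by
        refine setLIntegral_enorm_sq_le_of_meas_lt_le hT₀ fun t ht => ?_
        have ht₀ : 0 < t := hT₀.trans_le ht
        have hweak := ofReal_rpow_mul_meas_lt_abs_le_lorentzNorm_top (μ := μ) (r := r)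
          (fun x => ‖u x‖) (by linarith) ht₀
        simp only [abs_norm] at hweak
        simpa using ENNReal.rpow_mul_le_one_of_rpow_mul_le (p := 3) (by simpa using ht₀)
          ofReal_ne_top (ENNReal.ofReal_le_ofReal ht) hr (hweak.trans hA)
    _ ≤ 8 := by
        rw [mul_one, ← ENNReal.ofReal_ofNat 8]
        exact ENNReal.ofReal_le_ofReal (div_le_self (by norm_num) hT)

end

lemma exists_truncation_level {A : ℝ≥0∞} (hA : A ≠ ⊤) {r : ℝ} (hr : 3 < r) :
    ∃ T : ℝ, 1 ≤ T ∧ A ^ r ≤ ENNReal.ofReal T ^ (r - 3) ∧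
      ENNReal.ofReal T ^ 2 ≤ 1 + A ^ (2 / (1 - 3 / r)) := by
  have hr₃ : r - 3 ≠ 0 := by linarith
  set T := max 1 (A ^ (r / (r - 3))) with hT_def
  have hT : T ≠ ⊤ := max_ne_top one_ne_top (by finiteness)
  refine ⟨T.toReal, ?_, ?_, ?_⟩ <;> try rw [ofReal_toReal hT]
  · simpa using ENNReal.toReal_mono hT (le_max_left 1 (A ^ (r / (r - 3))))
  · calc A ^ r = (A ^ (r / (r - 3))) ^ (r - 3) := by
          rw [← ENNReal.rpow_mul, div_mul_cancel₀ _ hr₃]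
      _ ≤ T ^ (r - 3) := by
          gcongr
          exact le_max_right _ _
  · have hsq : (A ^ (r / (r - 3))) ^ 2 = A ^ (2 / (1 - 3 / r)) := by
      rw [← ENNReal.rpow_natCast, ← ENNReal.rpow_mul]
      congr 1
      field_simp
      ring
    rcases max_cases 1 (A ^ (r / (r - 3))) with ⟨h, -⟩ | ⟨h, -⟩ <;> rw [hT_def, h]
    · simp
    · exact hsq.le.trans le_add_self

theorem weak_lorentz_bound_rho_u_general (r r₁ r₂ M : ℝ)
    (hr₁ : 3 < r₁) (h₁r : r₁ < r) :
    ∃ C : ℝ≥0, 0 < C ∧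
      ∀ (ρ : (Fin 3 → ℝ) → ℝ) (u : (Fin 3 → ℝ) → (Fin 3 → ℝ)),
        Measurable ρ → Measurable u →
        (∀ x, 0 ≤ ρ x ∧ ρ x ≤ M) →
        eLpNorm ρ 2 volume < ⊤ →
        eLpNorm ρ (ENNReal.ofReal r₂) volume < ⊤ →
        (eLpNorm (fun x => ρ x • u x) 2 volume) ^ 2 ≤
          (C : ℝ≥0∞) *
            (1 + (lorentzNorm volume r ⊤ (fun x => ‖u x‖)) ^ (2 / (1 - 3 / r))) *
            ((eLpNorm ρ 2 volume) ^ 2 + 1) := by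
  have hr : 3 < r := hr₁.trans h₁r
  refine ⟨1 + 8 * M.toNNReal ^ 2, by positivity, fun ρ u _ hu hρM _ _ => ?_⟩
  set A := lorentzNorm volume r ⊤ (fun x => ‖u x‖)
  have hC : ((1 + 8 * M.toNNReal ^ 2 : ℝ≥0) : ℝ≥0∞) = 1 + ENNReal.ofReal M ^ 2 * 8 := by
    push_cast; rw [mul_comm]; rfl
  rcases eq_or_ne A ⊤ with hA | hA
  · have hs : 0 < 2 / (1 - 3 / r) := div_pos two_pos (by rw [sub_pos, div_lt_one] <;> linarith)
    simp [hA, hs]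
  obtain ⟨T, hT, hAT, hTs⟩ := exists_truncation_level hA hr
  have hsplit := sq_eLpNorm_smul_le (μ := volume) (M := M) (T := T)
    (measurableSet_lt measurable_const hu.norm)
    (fun x => (Real.norm_of_nonneg (hρM x).1).trans_le (hρM x).2) (fun x hx => not_lt.1 hx)
  have htail := setLIntegral_enorm_sq_le_of_lorentzNorm_top_le (μ := volume) hr.le hT hAT
  calc eLpNorm (fun x => ρ x • u x) 2 volume ^ 2
      ≤ ENNReal.ofReal M ^ 2 * 8 + (1 + A ^ (2 / (1 - 3 / r))) * eLpNorm ρ 2 volume ^ 2 :=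
        hsplit.trans (by gcongr)
    _ ≤ _ := by rw [hC]; exact ENNReal.add_le_mul_mul_add_one le_self_add

/-- Weak-Lorentz bound for `ρu`: for `3 < r₁ < r < r₂ < ∞` with
`2/r = 1/r₁ + 1/r₂` and `s = 2/(1 − 3/r)`, if `0 ≤ ρ ≤ M` on `ℝ³` and
`ρ ∈ L² ∩ L^{r₂}`, then for any vector field `u`,
`‖ρu‖²_{L²} ≤ C(M,r)(1 + ‖u‖_{L^{r,∞}}^s)(‖ρ‖²_{L²} + 1)`. -/
theorem weak_lorentz_bound_rho_u (r r₁ r₂ M : ℝ)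
    (hr₁ : 3 < r₁) (h₁r : r₁ < r) (hrr₂ : r < r₂)
    (hsum : 2 / r = 1 / r₁ + 1 / r₂) (hM : 0 < M) :
    ∃ C : ℝ≥0, 0 < C ∧
      ∀ (ρ : (Fin 3 → ℝ) → ℝ) (u : (Fin 3 → ℝ) → (Fin 3 → ℝ)),
        Measurable ρ → Measurable u →
        (∀ x, 0 ≤ ρ x ∧ ρ x ≤ M) →
        eLpNorm ρ 2 volume < ⊤ →
        eLpNorm ρ (ENNReal.ofReal r₂) volume < ⊤ →
        (eLpNorm (fun x => ρ x • u x) 2 volume) ^ 2 ≤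
          (C : ℝ≥0∞) *
            (1 + (lorentzNorm volume r ⊤ (fun x => ‖u x‖)) ^ (2 / (1 - 3 / r))) *
            ((eLpNorm ρ 2 volume) ^ 2 + 1) :=
  weak_lorentz_bound_rho_u_general r r₁ r₂ M hr₁ h₁r
end
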